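/- arXiv:2605.06414 — 3 statements merged into one kernel-verified Lean document; each statement's English description precedes it below -/
import Mathlib

section
/- Let G be a complex m×n matrix with ‖G v‖ ≥ γ₀ ‖v‖ for all v (γ₀ > 0), and suppose constants C ≥ 1, c > 0 satisfy ‖exp(s M)‖ ≤ C e^{−c s} for all s ≥ 0. Let b ∈ ℂⁿ, w(t) = exp(t M)(b, 0) with first block r(t), x(t) = ∫₀ᵗ r(τ) dτ, and let x⋆ = lim_{t→∞} x(t). Then for every t ≥ 0, ‖x⋆ − x(t)‖ ≤ (C/c) ‖w(t)‖. -/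
open scoped Matrix ComplexInnerProductSpace
open Filter MeasureTheory

noncomputable section

/-- `ℂ^k` with the ℓ² norm. -/
abbrev Evec (k : ℕ) : Type := EuclideanSpace ℂ (Fin k)

/-- The joint space `ℂⁿ ⊕ ℂᵐ` with the ℓ² norm. -/
abbrev Jvec (n m : ℕ) : Type := EuclideanSpace ℂ (Fin n ⊕ Fin m)

/-- A complex matrix viewed as a continuous linear map between Euclidean spaces,
so that `‖matCLM A‖` is the induced ℓ² operator norm. -/
noncomputable def matCLM {α β : Type*} [Fintype α] [Fintype β] [DecidableEq β]
    (A : Matrix α β ℂ) : EuclideanSpace ℂ β →L[ℂ] EuclideanSpace ℂ α :=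
  LinearMap.toContinuousLinearMap (Matrix.toEuclideanLin A)

/-- The block matrix `M = [[0, -Gᴴ], [G, -I]]` on `ℂⁿ ⊕ ℂᵐ`. -/
def blockM {m n : ℕ} (G : Matrix (Fin m) (Fin n) ℂ) :
    Matrix (Fin n ⊕ Fin m) (Fin n ⊕ Fin m) ℂ :=
  Matrix.fromBlocks 0 (-Gᴴ) G (-1)

/-- The matrix exponential `exp (t M)` as a continuous linear map on `ℂⁿ ⊕ ℂᵐ`. -/
noncomputable def expM {m n : ℕ} (G : Matrix (Fin m) (Fin n) ℂ) (t : ℝ) :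
    Jvec n m →L[ℂ] Jvec n m :=
  NormedSpace.exp (t • matCLM (blockM G))

/-- Join two blocks into a joint vector. -/
def joinV {n m : ℕ} (r : Evec n) (s : Evec m) : Jvec n m :=
  (WithLp.equiv 2 _).symm (Sum.elim ((WithLp.equiv 2 _) r) ((WithLp.equiv 2 _) s))

/-- First (residual `r`) block of a joint vector. -/
def rblock {n m : ℕ} (w : Jvec n m) : Evec n :=
  (WithLp.equiv 2 _).symm fun i => w (Sum.inl i)

/-- Second (residual `s`) block of a joint vector. -/
def sblock {n m : ℕ} (w : Jvec n m) : Evec m :=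
  (WithLp.equiv 2 _).symm fun j => w (Sum.inr j)

/-- Residual dynamics `w(t) = exp (t M) (b, 0)`. -/
noncomputable def wdyn {m n : ℕ} (G : Matrix (Fin m) (Fin n) ℂ) (b : Evec n) (t : ℝ) :
    Jvec n m :=
  expM G t (joinV b 0)

/-- Accumulator `x(t) = ∫₀ᵗ r(τ) dτ`. -/
noncomputable def xacc {m n : ℕ} (G : Matrix (Fin m) (Fin n) ℂ) (b : Evec n) (t : ℝ) :
    Evec n :=
  ∫ τ in (0:ℝ)..t, rblock (wdyn G b τ)

/-!
Since `w(τ) = exp((τ - t) M) w(t)`, the stability bound gives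
`‖r(τ)‖ ≤ ‖w(τ)‖ ≤ C e^{-c(τ - t)} ‖w(t)‖` for `τ ≥ t`. Hence
`‖x(T) - x(t)‖ ≤ ∫_t^T C e^{-c(τ - t)} ‖w(t)‖ dτ ≤ (C / c) ‖w(t)‖` for every `T ≥ t`,
and letting `T → ∞` bounds `‖x⋆ - x(t)‖`.
-/

open Real in
theorem integral_exp_neg_mul_sub_le {c : ℝ} (hc : 0 < c) (t T : ℝ) :
    ∫ τ in t..T, exp (-c * (τ - t)) ≤ 1 / c := by
  have hderiv : ∀ τ ∈ Set.uIcc t T,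
      HasDerivAt (fun τ => exp (-c * (τ - t)) * (-c⁻¹)) (exp (-c * (τ - t))) τ := fun τ _ =>
    ((((hasDerivAt_id' τ).sub_const t).const_mul (-c)).exp.mul_const (-c⁻¹)).congr_deriv
      (by field_simp)
  rw [intervalIntegral.integral_eq_sub_of_hasDerivAt hderiv
    ((by fun_prop : Continuous _).intervalIntegrable _ _), sub_self, mul_zero, exp_zero, one_div]
  nlinarith [exp_pos (-c * (T - t)), inv_pos.mpr hc]

section ExpDecay

variable {E : Type*} [NormedAddCommGroup E] [NormedSpace ℝ E] {f : ℝ → E} {A c t : ℝ}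

theorem norm_integral_le_of_norm_le_exp_decay (hA : 0 ≤ A) (hc : 0 < c)
    (hdecay : ∀ τ, t ≤ τ → ‖f τ‖ ≤ A * Real.exp (-c * (τ - t))) {T : ℝ} (hT : t ≤ T) :
    ‖∫ τ in t..T, f τ‖ ≤ A / c :=
  calc ‖∫ τ in t..T, f τ‖ ≤ ∫ τ in t..T, A * Real.exp (-c * (τ - t)) :=
        intervalIntegral.norm_integral_le_of_norm_le hT
          (Eventually.of_forall fun τ hτ => hdecay τ hτ.1.le)
          ((by fun_prop : Continuous _).intervalIntegrable _ _)
    _ = A * ∫ τ in t..T, Real.exp (-c * (τ - t)) := intervalIntegral.integral_const_mul _ _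
    _ ≤ A * (1 / c) := mul_le_mul_of_nonneg_left (integral_exp_neg_mul_sub_le hc t T) hA
    _ = A / c := mul_one_div A c

theorem norm_sub_integral_le_of_norm_le_exp_decay (hA : 0 ≤ A) (hc : 0 < c)
    (hf : Continuous f) (hdecay : ∀ τ, t ≤ τ → ‖f τ‖ ≤ A * Real.exp (-c * (τ - t)))
    {a : ℝ} {L : E} (hlim : Tendsto (fun T => ∫ τ in a..T, f τ) atTop (nhds L)) :
    ‖L - ∫ τ in a..t, f τ‖ ≤ A / c := by
  refine le_of_tendsto (hlim.sub_const _).norm (eventually_atTop.2 ⟨t, fun T hT => ?_⟩)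
  rw [intervalIntegral.integral_interval_sub_left (hf.intervalIntegrable _ _)
    (hf.intervalIntegrable _ _)]
  exact norm_integral_le_of_norm_le_exp_decay hA hc hdecay hT

end ExpDecay

open NormedSpace in
theorem exp_add_smul {𝔸 : Type*} [NormedRing 𝔸] [NormedAlgebra ℝ 𝔸] [CompleteSpace 𝔸]
    (a : 𝔸) (s t : ℝ) : exp ((s + t) • a) = exp (s • a) * exp (t • a) := by
  let +nondep : NormedAlgebra ℚ 𝔸 := .restrictScalars ℚ ℝ 𝔸
  rw [add_smul, exp_add_of_commute (((Commute.refl a).smul_left s).smul_right t)]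

theorem norm_rblock_le {n m : ℕ} (w : Jvec n m) : ‖rblock w‖ ≤ ‖w‖ := by
  simp only [EuclideanSpace.norm_eq, Fintype.sum_sum_type]
  gcongr
  exact le_add_of_nonneg_right (by positivity)

theorem continuous_rblock {n m : ℕ} : Continuous (rblock : Jvec n m → Evec n) :=
  (PiLp.continuous_toLp 2 _).comp (by fun_prop)

section Dynamics

variable {m n : ℕ} (G : Matrix (Fin m) (Fin n) ℂ) (b : Evec n)

theorem expM_add (s t : ℝ) : expM G (s + t) = expM G s * expM G t :=
  exp_add_smul (matCLM (blockM G)) s t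

theorem wdyn_eq_expM_sub_apply (t τ : ℝ) : wdyn G b τ = expM G (τ - t) (wdyn G b t) := by
  rw [wdyn, wdyn, ← mul_apply_eq_comp, ← expM_add, sub_add_cancel]

theorem continuous_wdyn : Continuous (wdyn G b) := by
  let +nondep : NormedAlgebra ℚ (Jvec n m →L[ℂ] Jvec n m) := .restrictScalars ℚ ℝ _
  unfold wdyn expM
  fun_prop

theorem norm_rblock_wdyn_le {C c : ℝ}
    (hstab : ∀ s : ℝ, 0 ≤ s → ‖expM G s‖ ≤ C * Real.exp (-c * s)) {t τ : ℝ} (hτ : t ≤ τ) :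
    ‖rblock (wdyn G b τ)‖ ≤ C * ‖wdyn G b t‖ * Real.exp (-c * (τ - t)) :=
  calc ‖rblock (wdyn G b τ)‖ ≤ ‖expM G (τ - t) (wdyn G b t)‖ :=
        wdyn_eq_expM_sub_apply G b t τ ▸ norm_rblock_le _
    _ ≤ ‖expM G (τ - t)‖ * ‖wdyn G b t‖ := (expM G (τ - t)).le_opNorm _
    _ ≤ C * Real.exp (-c * (τ - t)) * ‖wdyn G b t‖ := by
        gcongr
        exact hstab _ (sub_nonneg.2 hτ)
    _ = C * ‖wdyn G b t‖ * Real.exp (-c * (τ - t)) := mul_right_comm _ _ _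

end Dynamics

theorem stmt2_tail_bound_general {m n : ℕ}
    (C c : ℝ) (hc : 0 < c)
    (G : Matrix (Fin m) (Fin n) ℂ)
    (hstab : ∀ s : ℝ, 0 ≤ s → ‖expM G s‖ ≤ C * Real.exp (-c * s))
    (b : Evec n) (xstar : Evec n)
    (hlim : Tendsto (xacc G b) atTop (nhds xstar)) :
    ∀ t : ℝ, 0 ≤ t → ‖xstar - xacc G b t‖ ≤ (C / c) * ‖wdyn G b t‖ := by
  intro t _
  have hC : 0 ≤ C := by simpa [expM] using (norm_nonneg _).trans (hstab 0 le_rfl)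
  rw [div_mul_eq_mul_div]
  exact norm_sub_integral_le_of_norm_le_exp_decay (mul_nonneg hC (norm_nonneg _)) hc
    (continuous_rblock.comp (continuous_wdyn G b)) (fun τ => norm_rblock_wdyn_le G b hstab)
    hlim

theorem stmt2_tail_bound {m n : ℕ} (hm : 0 < m) (hn : 0 < n)
    (γ₀ C c : ℝ) (hγ : 0 < γ₀) (hC : 1 ≤ C) (hc : 0 < c)
    (G : Matrix (Fin m) (Fin n) ℂ)
    (hG : ∀ v : Evec n, γ₀ * ‖v‖ ≤ ‖matCLM G v‖)
    (hstab : ∀ s : ℝ, 0 ≤ s → ‖expM G s‖ ≤ C * Real.exp (-c * s))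
    (b : Evec n) (xstar : Evec n)
    (hlim : Tendsto (xacc G b) atTop (nhds xstar)) :
    ∀ t : ℝ, 0 ≤ t → ‖xstar - xacc G b t‖ ≤ (C / c) * ‖wdyn G b t‖ :=
  stmt2_tail_bound_general C c hc G hstab b xstar hlim
end
end

section
/- Let G be a complex m×n matrix with ‖G v‖ ≥ γ₀ ‖v‖ for all v ∈ ℂⁿ (γ₀ > 0), K = (Gᴴ G)⁻¹ Gᴴ, and let 0 < η < γ₀. Define the Lyapunov functional E(r, s) = ‖r‖² + ‖s‖² − 2η Re⟨r, K s⟩ for r ∈ ℂⁿ, s ∈ ℂᵐ. Then for all r, s: (1 − η/γ₀)(‖r‖² + ‖s‖²) ≤ E(r, s) ≤ (1 + η/γ₀)(‖r‖² + ‖s‖²). -/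
/-! Since `‖G v‖ ≥ γ₀ ‖v‖`, `G` is injective, so `Gᴴ G` is invertible and `G K` is the
orthogonal projection onto the range of `G`. Hence `γ₀ ‖K s‖ ≤ ‖G K s‖ ≤ ‖s‖`, and by
Cauchy–Schwarz and AM–GM the cross term obeys
`2η |Re ⟪r, K s⟫| ≤ 2 (η/γ₀) ‖r‖ ‖s‖ ≤ (η/γ₀) (‖r‖² + ‖s‖²)`. -/

open scoped Matrix ComplexInnerProductSpace
open Filter MeasureTheory

noncomputable section

open scoped ComplexOrder

section InnerProductSpace

variable {𝕜 E : Type*} [RCLike 𝕜] [NormedAddCommGroup E] [InnerProductSpace 𝕜 E]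

lemma norm_le_norm_of_inner_sub_eq_zero {w s : E} (h : inner 𝕜 w (s - w) = 0) :
    ‖w‖ ≤ ‖s‖ := by
  have hpyth := norm_add_sq_eq_norm_sq_add_norm_sq_of_inner_eq_zero w (s - w) h
  rw [add_sub_cancel] at hpyth
  nlinarith [norm_nonneg w, norm_nonneg s, norm_nonneg (s - w)]

end InnerProductSpace

section Matrix

variable {α β γ : Type*} [Fintype α] [Fintype β] [Fintype γ]

lemma matCLM_apply [DecidableEq β] (A : Matrix α β ℂ) (x : EuclideanSpace ℂ β) :
    matCLM A x = WithLp.toLp 2 (A *ᵥ x.ofLp) := rfl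

lemma matCLM_mul_apply [DecidableEq β] [DecidableEq γ] (A : Matrix α β ℂ)
    (B : Matrix β γ ℂ) (x : EuclideanSpace ℂ γ) :
    matCLM (A * B) x = matCLM A (matCLM B x) := by
  simp [matCLM_apply, Matrix.mulVec_mulVec]

lemma inner_matCLM_left [DecidableEq α] [DecidableEq β] (A : Matrix α β ℂ)
    (x : EuclideanSpace ℂ β) (y : EuclideanSpace ℂ α) :
    ⟪matCLM A x, y⟫ = ⟪x, matCLM Aᴴ y⟫ := by
  simp [matCLM, Matrix.toEuclideanLin_conjTranspose_eq_adjoint, LinearMap.adjoint_inner_right]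

lemma isUnit_conjTranspose_mul_self [DecidableEq β] {A : Matrix α β ℂ}
    (hA : Function.Injective A.mulVec) : IsUnit (Aᴴ * A) := by
  have hker : LinearMap.ker (Aᴴ * A).mulVecLin = ⊥ := by
    rw [Matrix.ker_mulVecLin_conjTranspose_mul_self]
    exact LinearMap.ker_eq_bot.mpr hA
  exact Matrix.mulVec_injective_iff_isUnit.mp (LinearMap.ker_eq_bot.mp hker)

lemma mulVec_injective_of_mul_norm_le [DecidableEq β] {A : Matrix α β ℂ} {c : ℝ} (hc : 0 < c)
    (hA : ∀ v, c * ‖v‖ ≤ ‖matCLM A v‖) : Function.Injective A.mulVec := by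
  refine (injective_iff_map_eq_zero A.mulVecLin).mpr fun v hv => ?_
  have hbound := hA (WithLp.toLp 2 v)
  rw [matCLM_apply, WithLp.ofLp_toLp, ← Matrix.mulVecLin_apply, hv, WithLp.toLp_zero,
    norm_zero] at hbound
  have hv0 : ‖WithLp.toLp 2 v‖ = 0 :=
    le_antisymm (nonpos_of_mul_nonpos_right hbound hc) (norm_nonneg _)
  simpa using hv0

lemma norm_matCLM_mul_leftPinv_le [DecidableEq α] [DecidableEq β] {A : Matrix α β ℂ}
    (hA : IsUnit (Aᴴ * A)) (s : EuclideanSpace ℂ α) :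
    ‖matCLM A (matCLM ((Aᴴ * A)⁻¹ * Aᴴ) s)‖ ≤ ‖s‖ := by
  set v := matCLM ((Aᴴ * A)⁻¹ * Aᴴ) s
  have hnormal : matCLM Aᴴ (matCLM A v) = matCLM Aᴴ s := by
    rw [← matCLM_mul_apply, ← matCLM_mul_apply, ← Matrix.mul_assoc,
      Matrix.mul_nonsing_inv _ ((Matrix.isUnit_iff_isUnit_det _).mp hA), Matrix.one_mul]
  refine norm_le_norm_of_inner_sub_eq_zero (𝕜 := ℂ) ?_
  rw [inner_matCLM_left, map_sub, hnormal, sub_self, inner_zero_right]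

lemma mul_norm_matCLM_leftPinv_le [DecidableEq α] [DecidableEq β] {A : Matrix α β ℂ} {c : ℝ}
    (hc : 0 < c) (hA : ∀ v, c * ‖v‖ ≤ ‖matCLM A v‖) (s : EuclideanSpace ℂ α) :
    c * ‖matCLM ((Aᴴ * A)⁻¹ * Aᴴ) s‖ ≤ ‖s‖ :=
  (hA _).trans <| norm_matCLM_mul_leftPinv_le
    (isUnit_conjTranspose_mul_self (mulVec_injective_of_mul_norm_le hc hA)) s

end Matrix

lemma abs_two_mul_re_inner_le {𝕜 E : Type*} [RCLike 𝕜] [NormedAddCommGroup E]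
    [InnerProductSpace 𝕜 E] {r y : E} {b c : ℝ} (hc : 0 < c) (hy : c * ‖y‖ ≤ b) :
    |2 * RCLike.re (inner 𝕜 r y)| ≤ (‖r‖ ^ 2 + b ^ 2) / c := by
  rw [le_div_iff₀ hc]
  calc |2 * RCLike.re (inner 𝕜 r y)| * c ≤ 2 * ‖r‖ * (c * ‖y‖) := by
        rw [abs_mul, abs_two]
        nlinarith [(RCLike.abs_re_le_norm (inner 𝕜 r y)).trans (norm_inner_le_norm r y)]
    _ ≤ 2 * ‖r‖ * b := by gcongr
    _ ≤ ‖r‖ ^ 2 + b ^ 2 := two_mul_le_add_sq _ _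

theorem stmt5_lyapunov_norm_equivalence_general {m n : ℕ}
    (γ₀ η : ℝ) (hγ : 0 < γ₀) (hη0 : 0 < η)
    (G : Matrix (Fin m) (Fin n) ℂ)
    (hG : ∀ v : Evec n, γ₀ * ‖v‖ ≤ ‖matCLM G v‖) :
    ∀ (r : Evec n) (s : Evec m),
      (1 - η / γ₀) * (‖r‖ ^ 2 + ‖s‖ ^ 2) ≤
        ‖r‖ ^ 2 + ‖s‖ ^ 2 - 2 * η * (⟪r, matCLM ((Gᴴ * G)⁻¹ * Gᴴ) s⟫).re ∧
      ‖r‖ ^ 2 + ‖s‖ ^ 2 - 2 * η * (⟪r, matCLM ((Gᴴ * G)⁻¹ * Gᴴ) s⟫).re ≤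
        (1 + η / γ₀) * (‖r‖ ^ 2 + ‖s‖ ^ 2) := by
  intro r s
  set c := (⟪r, matCLM ((Gᴴ * G)⁻¹ * Gᴴ) s⟫).re
  have hcross : |2 * c| ≤ (‖r‖ ^ 2 + ‖s‖ ^ 2) / γ₀ :=
    abs_two_mul_re_inner_le (𝕜 := ℂ) hγ (mul_norm_matCLM_leftPinv_le hγ hG s)
  have hη_cross : |2 * η * c| ≤ η / γ₀ * (‖r‖ ^ 2 + ‖s‖ ^ 2) :=
    calc |2 * η * c| = |2 * c| * η := by rw [mul_right_comm, abs_mul, abs_of_pos hη0]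
      _ ≤ (‖r‖ ^ 2 + ‖s‖ ^ 2) / γ₀ * η := by gcongr
      _ = η / γ₀ * (‖r‖ ^ 2 + ‖s‖ ^ 2) := by ring
  constructor <;> linarith [abs_le.mp hη_cross]

theorem stmt5_lyapunov_norm_equivalence {m n : ℕ} (hm : 0 < m) (hn : 0 < n)
    (γ₀ η : ℝ) (hγ : 0 < γ₀) (hη0 : 0 < η) (hη : η < γ₀)
    (G : Matrix (Fin m) (Fin n) ℂ)
    (hG : ∀ v : Evec n, γ₀ * ‖v‖ ≤ ‖matCLM G v‖) :
    ∀ (r : Evec n) (s : Evec m),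
      (1 - η / γ₀) * (‖r‖ ^ 2 + ‖s‖ ^ 2) ≤
        ‖r‖ ^ 2 + ‖s‖ ^ 2 - 2 * η * (⟪r, matCLM ((Gᴴ * G)⁻¹ * Gᴴ) s⟫).re ∧
      ‖r‖ ^ 2 + ‖s‖ ^ 2 - 2 * η * (⟪r, matCLM ((Gᴴ * G)⁻¹ * Gᴴ) s⟫).re ≤
        (1 + η / γ₀) * (‖r‖ ^ 2 + ‖s‖ ^ 2) :=
  stmt5_lyapunov_norm_equivalence_general γ₀ η hγ hη0 G hG
end
end

section
/- Let G be a complex m×n matrix, b ∈ ℂⁿ, and let w(t) = exp(t M)(b, 0) with blocks (r(t), s(t)). Then for every t ∈ ℝ, the real-valued function u(t) = ‖r(t)‖² + ‖s(t)‖² is differentiable at t with derivative u′(t) = −2 ‖s(t)‖². -/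
open scoped Matrix ComplexInnerProductSpace
open Filter MeasureTheory

noncomputable section

/-!
Since `w' = M w`, `d/dt ‖w‖² = 2 Re ⟪w, M w⟫`. In blocks,
`⟪w, M w⟫ = -⟪r, Gᴴ s⟫ + ⟪s, G r⟫ - ‖s‖² = -conj z + z - ‖s‖²` with `z = ⟪s, G r⟫`, because
`Gᴴ` is the adjoint of `G`; the skew part `z - conj z` is purely imaginary, leaving `-‖s‖²`.
-/

lemma inner_matCLM_conjTranspose_right {α β : Type*} [Fintype α] [Fintype β] [DecidableEq α]
    [DecidableEq β] (A : Matrix α β ℂ) (x : EuclideanSpace ℂ β) (y : EuclideanSpace ℂ α) :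
    ⟪x, matCLM Aᴴ y⟫ = ⟪matCLM A x, y⟫ := by
  simp only [matCLM, LinearMap.coe_toContinuousLinearMap',
    Matrix.toEuclideanLin_conjTranspose_eq_adjoint]
  exact LinearMap.adjoint_inner_right _ _ _

lemma EuclideanSpace.real_inner_eq_re_inner {ι : Type*} [Fintype ι]
    (x y : EuclideanSpace ℂ ι) : inner ℝ x y = (⟪x, y⟫).re := by
  simp only [PiLp.inner_apply, Complex.inner, Complex.re_sum, RCLike.inner_apply]

section Blocks

variable {m n : ℕ}

lemma inner_eq_inner_rblock_add_inner_sblock (v w : Jvec n m) :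
    ⟪v, w⟫ = ⟪rblock v, rblock w⟫ + ⟪sblock v, sblock w⟫ := by
  simp [PiLp.inner_apply, Fintype.sum_sum_type, rblock, sblock]

lemma norm_sq_rblock_add_norm_sq_sblock (w : Jvec n m) :
    ‖rblock w‖ ^ 2 + ‖sblock w‖ ^ 2 = ‖w‖ ^ 2 := by
  have h := inner_eq_inner_rblock_add_inner_sblock w w
  simp only [inner_self_eq_norm_sq_to_K] at h
  exact_mod_cast h.symm

lemma rblock_matCLM_blockM (G : Matrix (Fin m) (Fin n) ℂ) (w : Jvec n m) :
    rblock (matCLM (blockM G) w) = -matCLM Gᴴ (sblock w) := by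
  ext i
  simp [rblock, sblock, matCLM, blockM, Matrix.toEuclideanLin, Matrix.mulVec, dotProduct,
    Fintype.sum_sum_type]

lemma sblock_matCLM_blockM (G : Matrix (Fin m) (Fin n) ℂ) (w : Jvec n m) :
    sblock (matCLM (blockM G) w) = matCLM G (rblock w) - sblock w := by
  ext j
  simp [rblock, sblock, matCLM, blockM, Matrix.toEuclideanLin, Matrix.mulVec, dotProduct,
    Fintype.sum_sum_type, Matrix.one_apply, sub_eq_add_neg]

lemma re_inner_self_matCLM_blockM (G : Matrix (Fin m) (Fin n) ℂ) (w : Jvec n m) :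
    (⟪w, matCLM (blockM G) w⟫).re = -‖sblock w‖ ^ 2 := by
  set r := rblock w
  set s := sblock w
  have h : ⟪w, matCLM (blockM G) w⟫ = -⟪r, matCLM Gᴴ s⟫ + ⟪s, matCLM G r⟫ - ⟪s, s⟫ := by
    rw [inner_eq_inner_rblock_add_inner_sblock, rblock_matCLM_blockM, sblock_matCLM_blockM,
      inner_neg_right, inner_sub_right]
    ring
  have hsymm : (⟪matCLM G r, s⟫).re = (⟪s, matCLM G r⟫).re :=
    inner_re_symm (𝕜 := ℂ) _ _
  have hself : (⟪s, s⟫).re = ‖s‖ ^ 2 := inner_self_eq_norm_sq (𝕜 := ℂ) s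
  rw [h, inner_matCLM_conjTranspose_right]
  simp only [Complex.sub_re, Complex.add_re, Complex.neg_re, hsymm, hself]
  ring

lemma hasDerivAt_wdyn (G : Matrix (Fin m) (Fin n) ℂ) (b : Evec n) (t : ℝ) :
    HasDerivAt (wdyn G b) (matCLM (blockM G) (wdyn G b t)) t := by
  have hexp : HasDerivAt (fun τ : ℝ => NormedSpace.exp (τ • matCLM (blockM G)))
      (matCLM (blockM G) * NormedSpace.exp (t • matCLM (blockM G))) t := by
    simpa using hasDerivAt_exp_smul_const' (𝕂 := ℝ) (matCLM (blockM G)) t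
  exact ((ContinuousLinearMap.apply ℂ (Jvec n m) (joinV b 0)).restrictScalars
    ℝ).hasFDerivAt.comp_hasDerivAt t hexp

end Blocks

theorem stmt6_norm_sq_derivative_general {m n : ℕ}
    (G : Matrix (Fin m) (Fin n) ℂ) (b : Evec n) :
    ∀ t : ℝ,
      HasDerivAt
        (fun τ : ℝ => ‖rblock (wdyn G b τ)‖ ^ 2 + ‖sblock (wdyn G b τ)‖ ^ 2)
        (-2 * ‖sblock (wdyn G b t)‖ ^ 2) t := by
  intro t
  simp only [norm_sq_rblock_add_norm_sq_sblock]
  convert (hasDerivAt_wdyn G b t).norm_sq using 1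
  rw [EuclideanSpace.real_inner_eq_re_inner, re_inner_self_matCLM_blockM]
  ring

theorem stmt6_norm_sq_derivative {m n : ℕ} (hm : 0 < m) (hn : 0 < n)
    (G : Matrix (Fin m) (Fin n) ℂ) (b : Evec n) :
    ∀ t : ℝ,
      HasDerivAt
        (fun τ : ℝ => ‖rblock (wdyn G b τ)‖ ^ 2 + ‖sblock (wdyn G b τ)‖ ^ 2)
        (-2 * ‖sblock (wdyn G b t)‖ ^ 2) t :=
  stmt6_norm_sq_derivative_general G b
end
end
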